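/- Let (A_j)_{j≥0} be a nondecreasing convex sequence of nonnegative reals (i.e., A_{j+1} - A_j is nondecreasing in j). Then for every δ > 0 and every y ≥ 0, if j ≤ y+1 and x ≥ 0 satisfy A_{j+x} - A_j ≤ (1+δ)(A_{y+1} - A_y), then j + x ≤ y + ⌊2+δ⌋. -/
import Mathlib


/-- Convexity lemma for staggered phases: if `A` is a nonnegative, strictly increasing,
convex sequence, `j ≤ y+1` and `A (j+x) - A j ≤ (1+δ)(A (y+1) - A y)`,
then `j + x ≤ y + ⌊2+δ⌋`. -/
theorem stmt_0 (A : ℕ → ℝ) (hnonneg : ∀ n, 0 ≤ A n)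
    (hstrict : ∀ n, A n < A (n + 1))
    (hconvex : ∀ n, A (n + 1) - A n ≤ A (n + 2) - A (n + 1))
    (δ : ℝ) (hδ : 0 < δ) (y j x : ℕ) (hj : j ≤ y + 1)
    (h : A (j + x) - A j ≤ (1 + δ) * (A (y + 1) - A y)) :
    (j + x : ℤ) ≤ (y : ℤ) + ⌊(2 : ℝ) + δ⌋ := by
  set d : ℕ → ℝ := fun n => A (n + 1) - A n with hd
  have hdmono : Monotone d := by
    apply monotone_nat_of_le_succ
    intro n
    simpa [hd] using hconvex n
  have hAmono : Monotone A := monotone_nat_of_le_succ (fun n => (hstrict n).le)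
  have hdy : 0 < d y := sub_pos.mpr (hstrict y)
  -- key: A (a + k) - A a ≥ k * d y for a ≥ y
  have key : ∀ k a : ℕ, y ≤ a → (k : ℝ) * d y ≤ A (a + k) - A a := by
    intro k
    induction k with
    | zero => intro a _; simp
    | succ n ih =>
        intro a ha
        have h1 := ih a ha
        have h2 : d y ≤ d (a + n) := hdmono (le_trans ha (Nat.le_add_right a n))
        have : ((n : ℝ) + 1) * d y ≤ (A (a + n) - A a) + d (a + n) := by
          nlinarith
        simpa [hd, add_assoc, Nat.cast_succ] using this
  by_contra hcon
  push_neg at hcon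
  set m : ℤ := ⌊(2 : ℝ) + δ⌋ with hm
  have hm2 : (2 : ℤ) ≤ m := by
    rw [hm]
    exact Int.le_floor.mpr (by push_cast; linarith)
  set M : ℕ := m.toNat with hM
  have hMm : (M : ℤ) = m := Int.toNat_of_nonneg (by omega)
  have hjx : y + 1 + M ≤ j + x := by omega
  have hA1 : A (y + 1 + M) ≤ A (j + x) := hAmono hjx
  have hA2 : A j ≤ A (y + 1) := hAmono hj
  have hkey := key M (y + 1) (Nat.le_succ y)
  have hMgt : (1 : ℝ) + δ < (M : ℝ) := by
    have hfl : (2 : ℝ) + δ - 1 < (m : ℝ) := Int.sub_one_lt_floor _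
    have : ((M : ℤ) : ℝ) = (m : ℝ) := by exact_mod_cast congrArg Int.cast hMm
    push_cast at this ⊢
    linarith
  have : (1 + δ) * (d y) < (M : ℝ) * d y := by
    exact (mul_lt_mul_of_pos_right hMgt hdy)
  have hfinal : (1 + δ) * (A (y + 1) - A y) < A (j + x) - A j := by
    have : (1 + δ) * d y < A (j + x) - A j := by linarith
    simpa [hd] using this
  linarith
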